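/- arXiv:1702.07703 — 3 statements merged into one kernel-verified Lean document; each statement's English description precedes it below -/
import Mathlib

section
/- Let q ≥ 4 be an integer, ε ∈ (0, 1/2], n ≥ 1, and let ρ ≥ 1 be a real number such that α_ε^{1/ρ} ≥ 1/2 if q is even, and α_ε^{1/ρ} ≥ 1/(2 cos(π/q)) if q is odd. Then for every probability mass function P on (ZMod q)ⁿ one has Qⁿ(ρ, P) ≥ θ_q^{−n}, where θ_q = q/2 if q is even and θ_q = q cos(π/q)/(1 + cos(π/q)) if q is odd; equivalently, E_x^n(ρ) := −(ρ/n) log₂ min_P Qⁿ(ρ, P) ≤ ρ log₂ θ_q. -/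
/-- The typewriter channel transition probabilities on `ZMod q`. -/
noncomputable def W (q : ℕ) (ε : ℝ) (y x : ZMod q) : ℝ :=
  if y = x then 1 - ε else if y = x + 1 then ε else 0

/-- `α_ε = √(ε(1-ε))`. -/
noncomputable def alphaE (ε : ℝ) : ℝ := Real.sqrt (ε * (1 - ε))

/-- Single-letter Bhattacharyya kernel `g₁(a,b) = Σ_y √(W(y|a) W(y|b))`. -/
noncomputable def g1 (q : ℕ) [NeZero q] (ε : ℝ) (a b : ZMod q) : ℝ :=
  ∑ y : ZMod q, Real.sqrt (W q ε y a * W q ε y b)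

/-- `gₙ(x,x') = ∏ₖ g₁(xₖ, x'ₖ)`. -/
noncomputable def gn (q : ℕ) [NeZero q] (n : ℕ) (ε : ℝ) (x x' : Fin n → ZMod q) : ℝ :=
  ∏ k, g1 q ε (x k) (x' k)

/-- The quadratic form `Qⁿ(ρ, P) = Σ_{x,x'} P(x)P(x') gₙ(x,x')^{1/ρ}`
(real `rpow`, so `0^{1/ρ} = 0` for `ρ ≥ 1`). -/
noncomputable def Qn (q : ℕ) [NeZero q] (n : ℕ) (ε ρ : ℝ)
    (P : (Fin n → ZMod q) → ℝ) : ℝ :=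
  ∑ x : Fin n → ZMod q, ∑ x' : Fin n → ZMod q,
    P x * P x' * (gn q n ε x x') ^ (1 / ρ)

/-- `θ_q`: `q/2` for even `q`, and the Lovász theta function of the `q`-cycle for odd `q`. -/
noncomputable def thetaQ (q : ℕ) : ℝ :=
  if Even q then (q : ℝ) / 2
  else (q : ℝ) * Real.cos (Real.pi / q) / (1 + Real.cos (Real.pi / q))

/-!
Entrywise, `gₙ^{1/ρ}` dominates the `n`-th tensor power of the circulant kernel `f` on `ZMod q`
with `f 0 = 1`, `f (±1) = t` and `f = 0` elsewhere, where `t = 1/2` for even `q` and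
`t = 1/(2 cos(π/q))` for odd `q`: the hypothesis on `α_ε^{1/ρ}` says exactly `t ≤ α_ε^{1/ρ}`.
The discrete Fourier transform diagonalises `f`, with eigenvalues `1 + 2t cos(2πk/q) ≥ 0`, so the
quadratic form of `f^{⊗n}` is a nonnegative combination of the `|P̂(j)|²`; as `∑ P = 1`, the term
`j = 0` alone equals `((1 + 2t)/q)ⁿ = θ_q⁻ⁿ`.
-/

open Finset ComplexConjugate

section SpectralKernel

variable {X J : Type*}

def quadForm [Fintype X] (K : X → X → ℝ) (P : X → ℝ) : ℝ :=
  ∑ x, ∑ x', P x * P x' * K x x'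

theorem quadForm_mono [Fintype X] {K K' : X → X → ℝ} (hK : ∀ x x', K x x' ≤ K' x x')
    {P : X → ℝ} (hP : ∀ x, 0 ≤ P x) : quadForm K P ≤ quadForm K' P :=
  sum_le_sum fun x _ => sum_le_sum fun x' _ =>
    mul_le_mul_of_nonneg_left (hK x x') (mul_nonneg (hP x) (hP x'))

def IsSpectralRep [Fintype J] (K : X → X → ℝ) (w : J → ℝ) (e : X → J → ℂ) : Prop :=
  ∀ x x', (K x x' : ℂ) = ∑ j, w j * (conj (e x j) * e x' j)

namespace IsSpectralRep

variable [Fintype J] {K : X → X → ℝ} {w : J → ℝ} {e : X → J → ℂ}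

theorem quadForm_eq [Fintype X] (h : IsSpectralRep K w e) (P : X → ℝ) :
    quadForm K P = ∑ j, w j * Complex.normSq (∑ x, P x * e x j) := by
  have h' : ∀ x x', (K x x' : ℂ) = ∑ j, w j * (conj (e x j) * e x' j) := h
  apply Complex.ofReal_injective
  simp only [quadForm, Complex.ofReal_sum, Complex.ofReal_mul, Complex.normSq_eq_conj_mul_self,
    map_sum, map_mul, Complex.conj_ofReal, sum_mul, mul_sum, h']
  rw [sum_comm_cycle]
  refine sum_congr rfl fun j _ => ?_
  rw [sum_comm]
  refine sum_congr rfl fun x' _ => sum_congr rfl fun x _ => ?_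
  ring

theorem le_quadForm [Fintype X] (h : IsSpectralRep K w e) (hw : ∀ j, 0 ≤ w j) {j₀ : J}
    (he : ∀ x, e x j₀ = 1) {P : X → ℝ} (hP : ∑ x, P x = 1) : w j₀ ≤ quadForm K P := by
  have hj₀ : Complex.normSq (∑ x, P x * e x j₀) = 1 := by
    simp_rw [he, mul_one]
    rw [← Complex.ofReal_sum, hP, Complex.ofReal_one, map_one]
  rw [h.quadForm_eq]
  calc w j₀ = w j₀ * Complex.normSq (∑ x, P x * e x j₀) := by rw [hj₀, mul_one]
    _ ≤ _ := single_le_sum (f := fun j => w j * Complex.normSq (∑ x, P x * e x j))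
        (fun j _ => mul_nonneg (hw j) (Complex.normSq_nonneg _)) (mem_univ j₀)

theorem pi {ι : Type*} [Fintype ι] [DecidableEq ι] (h : IsSpectralRep K w e) :
    IsSpectralRep (fun x x' : ι → X => ∏ i, K (x i) (x' i)) (fun j : ι → J => ∏ i, w (j i))
      (fun x j => ∏ i, e (x i) (j i)) := by
  intro x x'
  simp only [Complex.ofReal_prod, fun i => h (x i) (x' i), Fintype.prod_sum, map_prod,
    ← prod_mul_distrib]

end IsSpectralRep

end SpectralKernel

section Circulant

open ZMod

variable {N : ℕ} [NeZero N]

theorem isSpectralRep_sub_of_dft (f w : ZMod N → ℝ)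
    (hw : ∀ k, (w k : ℂ) = 𝓕 (fun m => (f m : ℂ)) k) :
    IsSpectralRep (fun a b => f (b - a)) (fun k => w k / N) (fun a k => stdAddChar (a * k)) := by
  intro a b
  have hinv := congrFun (dft.symm_apply_apply fun m => (f m : ℂ)) (b - a)
  rw [invDFT_apply] at hinv
  rw [← hinv, smul_eq_mul, mul_sum]
  refine sum_congr rfl fun k _ => ?_
  rw [← hw, ← AddChar.map_neg_eq_conj, ← AddChar.map_add_eq_mul, smul_eq_mul]
  push_cast
  ring_nf

end Circulant

section Cycle

open Real ZMod

variable {q : ℕ}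

/-- The largest `t` for which `1 + 2t cos(2πk/q) ≥ 0` for all `k`: the minimum of
`cos(2πk/q)` is `-1` for even `q` and `-cos(π/q)` for odd `q`. -/
noncomputable def cycleWeight (q : ℕ) : ℝ :=
  if Even q then 1 / 2 else 1 / (2 * cos (π / q))

theorem cos_pi_div_pos (hq : 3 ≤ q) : 0 < cos (π / q) := by
  apply cos_pos_of_mem_Ioo
  have hq' : (3 : ℝ) ≤ q := by exact_mod_cast hq
  constructor
  · linarith [div_pos pi_pos (by linarith : (0 : ℝ) < q), pi_pos]
  · rw [div_lt_div_iff₀ (by linarith) two_pos]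
    nlinarith [pi_pos]

theorem cycleWeight_pos (hq : 3 ≤ q) : 0 < cycleWeight q := by
  have := cos_pi_div_pos hq
  unfold cycleWeight
  split_ifs <;> positivity

theorem neg_cos_pi_div_le_cos (hq : Odd q) {v : ℕ} (hv : v < q) :
    -cos (π / q) ≤ cos (2 * π * v / q) := by
  have hq0 : (0 : ℝ) < q := by exact_mod_cast hq.pos
  set d := |(q : ℝ) - 2 * v| with hd
  obtain ⟨hd1, hdq⟩ : 1 ≤ d ∧ d ≤ q := by
    have hz : 1 ≤ |(q : ℤ) - 2 * (v : ℤ)| ∧ |(q : ℤ) - 2 * (v : ℤ)| ≤ q := by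
      obtain ⟨r, rfl⟩ := hq
      exact ⟨Int.one_le_abs (by omega), abs_le.mpr ⟨by omega, by omega⟩⟩
    have hcast : ((|(q : ℤ) - 2 * (v : ℤ)| : ℤ) : ℝ) = d := by push_cast; rfl
    rw [← hcast]
    exact ⟨by exact_mod_cast hz.1, by exact_mod_cast hz.2⟩
  have hangle : |π - 2 * π * v / q| = π * d / q := by
    rw [show π - 2 * π * v / q = π * ((q - 2 * v) / q) by field_simp, abs_mul, abs_div,
      abs_of_pos pi_pos, abs_of_pos hq0, mul_div_assoc]
  have hcos : cos (π * d / q) ≤ cos (π / q) :=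
    cos_le_cos_of_nonneg_of_le_pi (by positivity)
      (by rw [div_le_iff₀ hq0]; nlinarith [pi_pos])
      (div_le_div_of_nonneg_right (le_mul_of_one_le_right pi_pos.le hd1) hq0.le)
  have hflip : cos (2 * π * v / q) = -cos |π - 2 * π * v / q| := by
    rw [cos_abs, cos_pi_sub, neg_neg]
  rw [hflip, hangle]
  linarith

theorem one_ne_neg_one_of_three_le (hq : 3 ≤ q) : (1 : ZMod q) ≠ -1 := by
  intro h
  have h2 : ((2 : ℕ) : ZMod q) = 0 := by push_cast; linear_combination h
  exact absurd (Nat.le_of_dvd two_pos ((ZMod.natCast_eq_zero_iff 2 q).mp h2)) (by omega)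

variable [NeZero q]

noncomputable def cycleKernel (q : ℕ) [NeZero q] (m : ZMod q) : ℝ :=
  if m = 0 then 1 else if m = 1 ∨ m = -1 then cycleWeight q else 0

theorem cycleKernel_nonneg (hq : 3 ≤ q) (m : ZMod q) : 0 ≤ cycleKernel q m := by
  have := (cycleWeight_pos hq).le
  unfold cycleKernel
  split_ifs <;> norm_num [this]

noncomputable def cycleSpectrum (q : ℕ) [NeZero q] (k : ZMod q) : ℝ :=
  1 + 2 * cycleWeight q * cos (2 * π * k.val / q)

theorem cycleKernel_eq_indicators (hq : 3 ≤ q) (m : ZMod q) :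
    (cycleKernel q m : ℂ) = (if m = 0 then 1 else 0) + (if m = 1 then (cycleWeight q : ℂ) else 0)
      + (if m = -1 then (cycleWeight q : ℂ) else 0) := by
  have : Nontrivial (ZMod q) := ZMod.nontrivial_iff.mpr (by omega)
  have h10 : (1 : ZMod q) ≠ 0 := one_ne_zero
  have h1 := one_ne_neg_one_of_three_le hq
  unfold cycleKernel
  by_cases h0 : m = 0
  · subst h0
    simp [h10.symm, (neg_ne_zero.mpr h10).symm]
  by_cases hp : m = 1
  · subst hp; simp [h10, h1]
  by_cases hn : m = -1
  · subst hn; simp [neg_ne_zero.mpr h10, h1.symm]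
  simp [h0, hp, hn]

theorem stdAddChar_add_stdAddChar_neg (k : ZMod q) :
    stdAddChar k + stdAddChar (-k) = ((2 * cos (2 * π * k.val / q) : ℝ) : ℂ) := by
  rw [AddChar.map_neg_eq_conj, Complex.add_conj, stdAddChar_apply, toCircle_apply,
    show 2 * π * Complex.I * k.val / q = ((2 * π * k.val / q : ℝ) : ℂ) * Complex.I by
      push_cast; ring,
    Complex.exp_ofReal_mul_I_re]

theorem dft_cycleKernel (hq : 3 ≤ q) (k : ZMod q) :
    𝓕 (fun m => (cycleKernel q m : ℂ)) k = cycleSpectrum q k := by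
  simp only [dft_apply, cycleKernel_eq_indicators hq, smul_add, smul_ite, smul_zero,
    sum_add_distrib, sum_ite_eq', mem_univ, if_true]
  have hcos := stdAddChar_add_stdAddChar_neg k
  simp only [zero_mul, neg_zero, AddChar.map_zero_eq_one, one_mul, neg_mul, neg_neg,
    smul_eq_mul, cycleSpectrum] at hcos ⊢
  push_cast at hcos ⊢
  linear_combination (cycleWeight q : ℂ) * hcos

theorem cycleSpectrum_nonneg (hq : 3 ≤ q) (k : ZMod q) : 0 ≤ cycleSpectrum q k := by
  have hc := cos_pi_div_pos hq
  unfold cycleSpectrum cycleWeight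
  split_ifs with heven
  · nlinarith [neg_one_le_cos (2 * π * k.val / q)]
  · have := neg_cos_pi_div_le_cos (Nat.not_even_iff_odd.mp heven) (ZMod.val_lt k)
    rw [show 2 * (1 / (2 * cos (π / q))) * cos (2 * π * k.val / q)
      = cos (2 * π * k.val / q) / cos (π / q) by field_simp]
    rw [← sub_nonneg] at this
    have := div_nonneg this hc.le
    rw [sub_div, neg_div, div_self hc.ne'] at this
    linarith

theorem inv_thetaQ (hq : 3 ≤ q) : (thetaQ q)⁻¹ = cycleSpectrum q 0 / q := by
  have hc := cos_pi_div_pos hq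
  simp only [thetaQ, cycleSpectrum, cycleWeight, ZMod.val_zero, Nat.cast_zero, mul_zero,
    zero_div, cos_zero, mul_one]
  split_ifs
  · rw [inv_div]; ring
  · field_simp
    ring

end Cycle

section Channel

variable {q : ℕ} {ε : ℝ}

theorem W_self (a : ZMod q) : W q ε a a = 1 - ε := if_pos rfl

theorem W_add_one [Nontrivial (ZMod q)] (a : ZMod q) : W q ε (a + 1) a = ε := by
  rw [W, if_neg (by simp), if_pos rfl]

variable [NeZero q]

theorem g1_comm (a b : ZMod q) : g1 q ε a b = g1 q ε b a := by
  simp only [g1, mul_comm]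

theorem g1_nonneg (a b : ZMod q) : 0 ≤ g1 q ε a b :=
  sum_nonneg fun _ _ => Real.sqrt_nonneg _

variable [Nontrivial (ZMod q)]

theorem one_le_g1_self (hε₀ : 0 ≤ ε) (hε₁ : ε ≤ 1) (a : ZMod q) : 1 ≤ g1 q ε a a := by
  have hpair : ∑ y ∈ {a, a + 1}, Real.sqrt (W q ε y a * W q ε y a) ≤ g1 q ε a a :=
    sum_le_sum_of_subset_of_nonneg (subset_univ _) fun _ _ _ => Real.sqrt_nonneg _
  rw [sum_pair (by simp), W_self, W_add_one, Real.sqrt_mul_self (by linarith),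
    Real.sqrt_mul_self hε₀] at hpair
  linarith

theorem alphaE_le_g1_add_one (a : ZMod q) : alphaE ε ≤ g1 q ε a (a + 1) := by
  have hterm : Real.sqrt (W q ε (a + 1) a * W q ε (a + 1) (a + 1)) = alphaE ε := by
    rw [W_add_one, W_self, alphaE]
  exact hterm ▸ single_le_sum (f := fun y => Real.sqrt (W q ε y a * W q ε y (a + 1)))
    (fun _ _ => Real.sqrt_nonneg _) (mem_univ (a + 1))

theorem cycleKernel_sub_le_g1_rpow {r : ℝ} (hε₀ : 0 ≤ ε) (hε₁ : ε ≤ 1) (hr : 0 ≤ r)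
    (ht : cycleWeight q ≤ alphaE ε ^ r) (a b : ZMod q) :
    cycleKernel q (b - a) ≤ g1 q ε a b ^ r := by
  have hadj : ∀ c, cycleWeight q ≤ g1 q ε c (c + 1) ^ r := fun c =>
    ht.trans (Real.rpow_le_rpow (Real.sqrt_nonneg _) (alphaE_le_g1_add_one c) hr)
  unfold cycleKernel
  split_ifs with h0 h1
  · rw [sub_eq_zero.mp h0]
    exact Real.one_le_rpow (one_le_g1_self hε₀ hε₁ a) hr
  · rcases h1 with h1 | h1
    · rw [sub_eq_iff_eq_add'.mp h1]
      exact hadj a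
    · rw [show a = b + 1 by linear_combination -h1, g1_comm]
      exact hadj b
  · exact Real.rpow_nonneg (g1_nonneg a b) r

end Channel

section Bound

open ZMod

variable {q : ℕ} [NeZero q]

theorem cycleSpectrum_zero_div_pow_le_quadForm {ι : Type*} [Fintype ι] [DecidableEq ι]
    (hq : 3 ≤ q) {P : (ι → ZMod q) → ℝ} (hP : ∑ x, P x = 1) :
    (cycleSpectrum q 0 / q) ^ Fintype.card ι ≤
      quadForm (fun x x' => ∏ i, cycleKernel q (x' i - x i)) P := by
  have hrep := (isSpectralRep_sub_of_dft (cycleKernel q) (cycleSpectrum q)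
    fun k => (dft_cycleKernel hq k).symm).pi (ι := ι)
  rw [← card_univ, ← prod_const]
  exact hrep.le_quadForm
    (fun _ => prod_nonneg fun _ _ => div_nonneg (cycleSpectrum_nonneg hq _) q.cast_nonneg)
    (fun _ => by simp) hP

theorem prod_cycleKernel_le_gn_rpow {n : ℕ} {ε r : ℝ} (hq : 3 ≤ q) (hε₀ : 0 ≤ ε) (hε₁ : ε ≤ 1)
    (hr : 0 ≤ r) (ht : cycleWeight q ≤ alphaE ε ^ r) (x x' : Fin n → ZMod q) :
    ∏ i, cycleKernel q (x' i - x i) ≤ gn q n ε x x' ^ r := by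
  have : Nontrivial (ZMod q) := ZMod.nontrivial_iff.mpr (by omega)
  rw [gn, ← Real.finsetProd_rpow _ _ fun _ _ => g1_nonneg _ _]
  exact prod_le_prod (fun _ _ => cycleKernel_nonneg hq _)
    fun _ _ => cycleKernel_sub_le_g1_rpow hε₀ hε₁ hr ht _ _

end Bound

theorem stmt1_general (q n : ℕ) [NeZero q] (hq : 4 ≤ q)
    (ε ρ : ℝ) (hε : 0 < ε) (hε' : ε ≤ 1 / 2) (hρ : 1 ≤ ρ)
    (heven : Even q → 1 / 2 ≤ alphaE ε ^ (1 / ρ))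
    (hodd : Odd q → 1 / (2 * Real.cos (Real.pi / q)) ≤ alphaE ε ^ (1 / ρ)) :
    ∀ P : (Fin n → ZMod q) → ℝ, (∀ x, 0 ≤ P x) → (∑ x, P x = 1) →
      (thetaQ q ^ n)⁻¹ ≤ Qn q n ε ρ P := by
  intro P hP hP1
  have hq3 : 3 ≤ q := by omega
  have ht : cycleWeight q ≤ alphaE ε ^ (1 / ρ) := by
    unfold cycleWeight
    split_ifs with h
    exacts [heven h, hodd (Nat.not_even_iff_odd.mp h)]
  calc (thetaQ q ^ n)⁻¹ = (cycleSpectrum q 0 / q) ^ Fintype.card (Fin n) := by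
        rw [← inv_pow, inv_thetaQ hq3, Fintype.card_fin]
    _ ≤ quadForm (fun x x' => ∏ i, cycleKernel q (x' i - x i)) P :=
        cycleSpectrum_zero_div_pow_le_quadForm hq3 hP1
    _ ≤ Qn q n ε ρ P :=
        quadForm_mono (prod_cycleKernel_le_gn_rpow hq3 hε.le (by linarith) (by positivity) ht) hP

theorem stmt1 (q n : ℕ) [NeZero q] (hq : 4 ≤ q) (hn : 1 ≤ n)
    (ε ρ : ℝ) (hε : 0 < ε) (hε' : ε ≤ 1 / 2) (hρ : 1 ≤ ρ)
    (heven : Even q → 1 / 2 ≤ alphaE ε ^ (1 / ρ))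
    (hodd : Odd q → 1 / (2 * Real.cos (Real.pi / q)) ≤ alphaE ε ^ (1 / ρ)) :
    ∀ P : (Fin n → ZMod q) → ℝ, (∀ x, 0 ≤ P x) → (∑ x, P x = 1) →
      (thetaQ q ^ n)⁻¹ ≤ Qn q n ε ρ P :=
  stmt1_general q n hq ε ρ hε hε' hρ heven hodd
end

section
/- Let q ≥ 3 be an odd integer, c = (q−1)/2 ∈ ZMod q, n ≥ 1, and 0 ≤ ℓ ≤ n, 0 ≤ u ≤ n. Let S_ℓ^c = { ω ∈ (ZMod q)ⁿ : exactly ℓ coordinates of ω lie in {c, −c} and the remaining n−ℓ coordinates equal 0 }. Then for every x ∈ (ZMod q)ⁿ having exactly u coordinates in {1, −1} and all other coordinates equal to 0, Σ_{ω ∈ S_ℓ^c} e^{2πi⟨ω,x⟩/q} = 2^ℓ Σ_{j=0}^{ℓ} (−1)^j · binom(u, j) · binom(n−u, ℓ−j) · (cos(π/q))^j, where ⟨ω,x⟩ = Σ_k ω_k x_k ∈ ZMod q. In particular this sum is real. -/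
/-!
Writing `ψ` for the standard character, the summand is `∏ k, ψ (ω k * x k)`. Grouping the `ω` by
their support `T`, an `ℓ`-subset, the sum over the sign choices on `T` factors as
`∏ k ∈ T, (ψ (c * x k) + ψ (-c * x k))`. Each factor is `2` when `x k = 0`, and
`2 cos (2π c / q) = -2 cos (π / q)` when `x k = ±1` because `2c = q - 1`. An `ℓ`-subset meeting
the support of `x` in `j` points can be chosen in `C(u, j) C(n - u, ℓ - j)` ways.
-/

open Finset

section
variable {ι : Type*} [Fintype ι] [DecidableEq ι]

lemma card_filter_card_inter_powersetCard (A : Finset ι) {ℓ j : ℕ} (hj : j ≤ ℓ) :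
    #{T ∈ powersetCard ℓ (univ : Finset ι) | #(T ∩ A) = j}
      = (#A).choose j * (#Aᶜ).choose (ℓ - j) := by
  have hunion {S R : Finset ι} (hS : S ⊆ A) (hR : R ⊆ Aᶜ) :
      (S ∪ R) ∩ A = S ∧ (S ∪ R) \ A = R := by
    constructor <;> grind [mem_compl]
  rw [← card_powersetCard, ← card_powersetCard, ← card_product]
  refine card_nbij' (fun T => (T ∩ A, T \ A)) (fun p => p.1 ∪ p.2) ?_ ?_ ?_ ?_
  · intro T hT
    simp only [coe_filter, mem_powersetCard_univ, Set.mem_ofPred_eq] at hT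
    simp only [coe_product, Set.mem_prod, mem_coe, mem_powersetCard]
    refine ⟨⟨inter_subset_right, hT.2⟩, fun k hk => by simp [(mem_sdiff.1 hk).2], ?_⟩
    have := card_inter_add_card_sdiff T A
    omega
  · rintro ⟨S, R⟩ hp
    simp only [coe_product, Set.mem_prod, mem_coe, mem_powersetCard] at hp
    obtain ⟨⟨hSA, hS⟩, hRA, hR⟩ := hp
    simp only [coe_filter, mem_powersetCard_univ, Set.mem_ofPred_eq]
    rw [card_union_of_disjoint (disjoint_compl_right.mono hSA hRA), (hunion hSA hRA).1]
    omega
  · intro T _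
    exact sup_inf_sdiff T A
  · rintro ⟨S, R⟩ hp
    simp only [coe_product, Set.mem_prod, mem_coe, mem_powersetCard] at hp
    simp [hunion hp.1.1 hp.2.1]

lemma sum_powersetCard_prod_ite_mem {R : Type*} [CommSemiring R] (A : Finset ι) (ℓ : ℕ)
    (a b : R) :
    ∑ T ∈ powersetCard ℓ (univ : Finset ι), ∏ k ∈ T, (if k ∈ A then a else b)
      = ∑ j ∈ range (ℓ + 1),
          ((#A).choose j * (#Aᶜ).choose (ℓ - j) : ℕ) * a ^ j * b ^ (ℓ - j) := by
  have hprod : ∀ T ∈ powersetCard ℓ (univ : Finset ι),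
      ∏ k ∈ T, (if k ∈ A then a else b) = a ^ #(T ∩ A) * b ^ (ℓ - #(T ∩ A)) := by
    intro T hT
    have := card_inter_add_card_sdiff T A
    rw [prod_ite, prod_const, prod_const, filter_mem_eq_inter, filter_notMem_eq_sdiff,
      ← (mem_powersetCard_univ.1 hT)]
    congr
    omega
  rw [sum_congr rfl hprod,
    ← sum_fiberwise_of_maps_to (g := fun T => #(T ∩ A)) (t := range (ℓ + 1))]
  · refine sum_congr rfl fun j hj => ?_
    rw [sum_congr rfl fun T hT => by rw [(mem_filter.1 hT).2], sum_const,
      card_filter_card_inter_powersetCard A (Nat.lt_succ_iff.1 (mem_range.1 hj)), nsmul_eq_mul,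
      mul_assoc]
  · intro T hT
    rw [mem_range, Nat.lt_succ_iff, ← (mem_powersetCard_univ.1 hT)]
    exact card_le_card inter_subset_left

lemma sum_prod_eq_sum_powersetCard_of_mem_iff {R M : Type*} [Zero R] [CommSemiring M]
    (P : R → Prop) [DecidablePred P] (hP : ¬ P 0) {ℓ : ℕ} {S : Finset (ι → R)}
    (hS : ∀ ω, ω ∈ S ↔ #{k | P (ω k)} = ℓ ∧ ∀ k, ¬ P (ω k) → ω k = 0)
    (D : Finset R) (hD : ∀ r, r ∈ D ↔ P r) (f : ι → R → M) (hf : ∀ k, f k 0 = 1) :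
    ∑ ω ∈ S, ∏ k, f k (ω k)
      = ∑ T ∈ powersetCard ℓ (univ : Finset ι), ∏ k ∈ T, ∑ d ∈ D, f k d := by
  rw [← sum_fiberwise_of_maps_to (g := fun ω : ι → R => ({k | P (ω k)} : Finset ι))
    (t := powersetCard ℓ univ) fun ω hω => mem_powersetCard_univ.2 ((hS ω).1 hω).1]
  refine sum_congr rfl fun T hT => ?_
  have hfiber : {ω ∈ S | ({k | P (ω k)} : Finset ι) = T}
      = Fintype.piFinset fun k => if k ∈ T then D else {0} := by
    ext ω
    simp only [mem_filter, hS, Fintype.mem_piFinset]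
    constructor
    · rintro ⟨⟨-, hzero⟩, rfl⟩ k
      by_cases hk : P (ω k)
      · simp [hk, hD]
      · simp [hzero k hk, hP]
    · intro hω
      have hmem (k : ι) : P (ω k) ↔ k ∈ T := by
        by_cases hk : k ∈ T
        · simpa [hk, hD] using hω k
        · have : ω k = 0 := by simpa [hk] using hω k
          simp [hk, this, hP]
      have hsupp : ({k | P (ω k)} : Finset ι) = T := by ext k; simp [hmem]
      refine ⟨⟨hsupp ▸ mem_powersetCard_univ.1 hT, fun k hk => ?_⟩, hsupp⟩
      simpa [(hmem k).not.1 hk] using hω k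
  rw [hfiber, ← prod_univ_sum, ← Fintype.prod_ite_mem T]
  refine Fintype.prod_congr _ _ fun k => ?_
  split_ifs <;> simp [hf]
end

lemma ZMod.cexp_val_eq_stdAddChar {N : ℕ} [NeZero N] (j : ZMod N) :
    Complex.exp (2 * Real.pi * Complex.I * j.val / N) = ZMod.stdAddChar j := by
  rw [ZMod.stdAddChar_apply, ZMod.toCircle_apply]

lemma AddChar.map_sum_eq_prod {ι A M : Type*} [AddCommMonoid A] [CommMonoid M]
    (ψ : AddChar A M) (s : Finset ι) (f : ι → A) : ψ (∑ i ∈ s, f i) = ∏ i ∈ s, ψ (f i) := by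
  simpa [← ofAdd_sum] using map_prod ψ.toMonoidHom (fun i => Multiplicative.ofAdd (f i)) s

lemma ZMod.stdAddChar_add_stdAddChar_neg_of_eq_two_mul_add_one {q : ℕ} [NeZero q] {m : ℕ}
    (hq : q = 2 * m + 1) :
    ZMod.stdAddChar (m : ZMod q) + ZMod.stdAddChar (-(m : ZMod q))
      = ((-2 * Real.cos (Real.pi / q) : ℝ) : ℂ) := by
  have hm : (m : ZMod q) = ((m : ℤ) : ZMod q) := by push_cast; rfl
  rw [hm, ← Int.cast_neg, ZMod.stdAddChar_coe, ZMod.stdAddChar_coe]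
  have hangle : 2 * (Real.pi : ℂ) * Complex.I * (m : ℤ) / q
      = (Real.pi - Real.pi / q) * Complex.I := by
    have : (q : ℂ) ≠ 0 := Nat.cast_ne_zero.2 (NeZero.ne q)
    field_simp
    rw [hq]; push_cast; ring
  rw [Int.cast_neg, mul_neg, neg_div, hangle, ← neg_mul, ← Complex.two_cos, Complex.cos_pi_sub]
  push_cast
  ring

lemma ZMod.stdAddChar_mul_add_stdAddChar_neg_mul_of_eq_two_mul_add_one {q : ℕ} [NeZero q]
    {m : ℕ} (hq : q = 2 * m + 1) {y : ZMod q} (hy : y = 1 ∨ y = -1) :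
    ZMod.stdAddChar ((m : ZMod q) * y) + ZMod.stdAddChar (-(m : ZMod q) * y)
      = ((-2 * Real.cos (Real.pi / q) : ℝ) : ℂ) := by
  rcases hy with rfl | rfl
  · rw [mul_one, mul_one, ZMod.stdAddChar_add_stdAddChar_neg_of_eq_two_mul_add_one hq]
  · rw [mul_neg_one, mul_neg_one, neg_neg, add_comm,
      ZMod.stdAddChar_add_stdAddChar_neg_of_eq_two_mul_add_one hq]

theorem stmt13_general (q n ℓ u : ℕ) [NeZero q] (hq : 3 ≤ q) (hqo : Odd q)
    (x : Fin n → ZMod q)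
    (hx1 : (Finset.univ.filter fun k => x k = 1 ∨ x k = -1).card = u)
    (hx2 : ∀ k, ¬(x k = 1 ∨ x k = -1) → x k = 0) :
    ∑ ω ∈ Finset.univ.filter (fun ω : Fin n → ZMod q =>
        (Finset.univ.filter fun k =>
          ω k = (((q - 1) / 2 : ℕ) : ZMod q) ∨ ω k = -(((q - 1) / 2 : ℕ) : ZMod q)).card = ℓ ∧
        ∀ k, ¬(ω k = (((q - 1) / 2 : ℕ) : ZMod q) ∨ ω k = -(((q - 1) / 2 : ℕ) : ZMod q)) →
          ω k = 0),
      Complex.exp (2 * Real.pi * Complex.I * ((∑ k, ω k * x k : ZMod q).val : ℂ) / q)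
    = ((2 ^ ℓ * ∑ j ∈ Finset.range (ℓ + 1), (-1 : ℝ) ^ j * (u.choose j) *
        ((n - u).choose (ℓ - j)) * Real.cos (Real.pi / q) ^ j : ℝ) : ℂ) := by
  have hm : q = 2 * ((q - 1) / 2) + 1 := by obtain ⟨m, rfl⟩ := hqo; omega
  set c : ZMod q := (((q - 1) / 2 : ℕ) : ZMod q)
  have hc_ne : c ≠ 0 := by
    rw [Ne, ZMod.natCast_eq_zero_iff]
    exact Nat.not_dvd_of_pos_of_lt (by omega) (by omega)
  have hcc : c ≠ -c := ZMod.ne_neg_self hqo hc_ne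
  have hlocal (k : Fin n) : ∑ d ∈ {c, -c}, ZMod.stdAddChar (d * x k)
      = if k ∈ ({k | x k = 1 ∨ x k = -1} : Finset (Fin n))
        then ((-2 * Real.cos (Real.pi / q) : ℝ) : ℂ) else 2 := by
    rw [sum_pair hcc]
    split_ifs with hk
    · exact ZMod.stdAddChar_mul_add_stdAddChar_neg_mul_of_eq_two_mul_add_one hm
        (by simpa using hk)
    · rw [hx2 k (by simpa using hk)]
      norm_num
  simp only [ZMod.cexp_val_eq_stdAddChar, AddChar.map_sum_eq_prod]
  refine (sum_prod_eq_sum_powersetCard_of_mem_iff (fun r => r = c ∨ r = -c)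
    (by simpa [eq_comm (a := (0 : ZMod q))] using hc_ne) (ℓ := ℓ) (fun ω => by simp)
    {c, -c} (by simp) (fun k d => ZMod.stdAddChar (d * x k)) (by simp)).trans ?_
  rw [sum_congr rfl fun T _ => prod_congr rfl fun k _ => hlocal k, sum_powersetCard_prod_ite_mem,
    card_compl, Fintype.card_fin, hx1]
  push_cast
  rw [mul_sum]
  refine sum_congr rfl fun j hj => ?_
  rw [← pow_mul_pow_sub (2 : ℂ) (Nat.lt_succ_iff.1 (mem_range.1 hj)), mul_pow, neg_pow]
  ring

theorem stmt13 (q n ℓ u : ℕ) [NeZero q] (hq : 3 ≤ q) (hqo : Odd q) (hn : 1 ≤ n)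
    (hℓ : ℓ ≤ n) (hu : u ≤ n)
    (x : Fin n → ZMod q)
    (hx1 : (Finset.univ.filter fun k => x k = 1 ∨ x k = -1).card = u)
    (hx2 : ∀ k, ¬(x k = 1 ∨ x k = -1) → x k = 0) :
    ∑ ω ∈ Finset.univ.filter (fun ω : Fin n → ZMod q =>
        (Finset.univ.filter fun k =>
          ω k = (((q - 1) / 2 : ℕ) : ZMod q) ∨ ω k = -(((q - 1) / 2 : ℕ) : ZMod q)).card = ℓ ∧
        ∀ k, ¬(ω k = (((q - 1) / 2 : ℕ) : ZMod q) ∨ ω k = -(((q - 1) / 2 : ℕ) : ZMod q)) →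
          ω k = 0),
      Complex.exp (2 * Real.pi * Complex.I * ((∑ k, ω k * x k : ZMod q).val : ℂ) / q)
    = ((2 ^ ℓ * ∑ j ∈ Finset.range (ℓ + 1), (-1 : ℝ) ^ j * (u.choose j) *
        ((n - u).choose (ℓ - j)) * Real.cos (Real.pi / q) ^ j : ℝ) : ℂ) :=
  stmt13_general q n ℓ u hq hqo x hx1 hx2
end

section
/- Let q ≥ 4 be an integer, ε ∈ (0, 1/2], n ≥ 1, M ≥ 2, and let f : Fin M → (ZMod q)ⁿ be an encoder. Suppose m ≠ m′ are two messages whose codewords x = f(m) and x′ = f(m′) satisfy x′_k − x_k ∈ {0, 1, −1} for every coordinate k, and let D = |{ k : x_k ≠ x′_k }| (so the semidistance d(x, x′) = D is finite). Then for every decoder φ : (ZMod q)ⁿ → Fin M, max( Σ_{y : φ(y) ≠ m} Wⁿ(y|x), Σ_{y : φ(y) ≠ m′} Wⁿ(y|x′) ) ≥ (1/2) ε^D. -/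
/-- The `n`-fold memoryless extension `Wⁿ(y|x) = ∏ₖ W(yₖ|xₖ)`. -/
noncomputable def Wn (q : ℕ) [NeZero q] (n : ℕ) (ε : ℝ) (y x : Fin n → ZMod q) : ℝ :=
  ∏ k, W q ε (y k) (x k)


lemma W_nonneg (q : ℕ) (ε : ℝ) (hε : 0 < ε) (hε' : ε ≤ 1 / 2) (y x : ZMod q) :
    0 ≤ W q ε y x := by
  unfold W; split_ifs <;> linarith

lemma tw_one_ne_zero (q : ℕ) [NeZero q] (hq : 4 ≤ q) : (1 : ZMod q) ≠ 0 := by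
  haveI : Fact (1 < q) := ⟨by omega⟩
  exact one_ne_zero

lemma tw_two_ne_zero (q : ℕ) [NeZero q] (hq : 4 ≤ q) : (2 : ZMod q) ≠ 0 := by
  intro h
  have h2 : ((2 : ℕ) : ZMod q) = 0 := by exact_mod_cast h
  have := (ZMod.natCast_eq_zero_iff 2 q).mp h2
  have := Nat.le_of_dvd (by norm_num) this
  omega

lemma sum_W (q : ℕ) [NeZero q] (hq : 4 ≤ q) (ε : ℝ) (c : ZMod q) :
    ∑ a : ZMod q, W q ε a c = 1 := by
  have hne : c + 1 ≠ c := by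
    intro h
    exact tw_one_ne_zero q hq (by linear_combination h)
  have hpt : ∀ a : ZMod q, W q ε a c
      = (if a = c then (1 - ε : ℝ) else 0) + (if a = c + 1 then ε else 0) := by
    intro a
    unfold W
    split_ifs with h h' <;> try ring
    · exact absurd (h'.symm.trans h) hne
  simp only [hpt, Finset.sum_add_distrib, Finset.sum_ite_eq', Finset.mem_univ, if_true]
  ring

lemma sum_min_adj (q : ℕ) [NeZero q] (hq : 4 ≤ q) (ε : ℝ) (hε : 0 < ε) (hε' : ε ≤ 1 / 2)
    (c : ZMod q) :
    ∑ a : ZMod q, min (W q ε a c) (W q ε a (c + 1)) = ε := by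
  have h1 : (1 : ZMod q) ≠ 0 := tw_one_ne_zero q hq
  have h2 : (2 : ZMod q) ≠ 0 := tw_two_ne_zero q hq
  have hpt : ∀ a : ZMod q, min (W q ε a c) (W q ε a (c + 1))
      = (if a = c + 1 then ε else 0) := by
    intro a
    by_cases ha : a = c
    · have hb : a ≠ c + 1 := fun h => h1 (by linear_combination ha - h)
      have hc : a ≠ c + 1 + 1 := fun h => h2 (by linear_combination ha - h)
      simp only [W, if_pos ha, if_neg hb, if_neg hc]
      exact min_eq_right (by linarith)
    · by_cases hb : a = c + 1
      · simp only [W, if_neg ha, if_pos hb]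
        exact min_eq_left (by linarith)
      · by_cases hc : a = c + 1 + 1
        · simp only [W, if_neg ha, if_neg hb, if_pos hc]
          exact min_eq_left (by linarith)
        · simp only [W, if_neg ha, if_neg hb, if_neg hc]
          simp
  simp only [hpt, Finset.sum_ite_eq', Finset.mem_univ, if_true]

/- Statement 17: if two codewords `x = f(m)`, `x' = f(m')` are at finite semidistance
`D` (coordinatewise differences in `{0,1,-1}`, differing in `D` coordinates), then
for any decoder, the larger of the two error probabilities is at least `(1/2) εᴰ`. -/
theorem stmt17 (q : ℕ) [NeZero q] (hq : 4 ≤ q)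
    (ε : ℝ) (hε : 0 < ε) (hε' : ε ≤ 1 / 2)
    (n M : ℕ) (hn : 1 ≤ n) (hM : 2 ≤ M)
    (f : Fin M → (Fin n → ZMod q)) (m m' : Fin M) (hmm : m ≠ m')
    (hclose : ∀ k, f m' k - f m k = 0 ∨ f m' k - f m k = 1 ∨ f m' k - f m k = -1)
    (φ : (Fin n → ZMod q) → Fin M) :
    (1 / 2) * ε ^ ((Finset.univ.filter fun k => f m k ≠ f m' k).card) ≤
      max (∑ y : Fin n → ZMod q, if φ y = m then 0 else Wn q n ε y (f m))
          (∑ y : Fin n → ZMod q, if φ y = m' then 0 else Wn q n ε y (f m')) := by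
  classical
  have h1 : (1 : ZMod q) ≠ 0 := tw_one_ne_zero q hq
  set x : Fin n → ZMod q := f m with hxdef
  set x' : Fin n → ZMod q := f m' with hx'def
  set g : Fin n → ZMod q → ℝ := fun k a => min (W q ε a (x k)) (W q ε a (x' k)) with hg
  have hWnn : ∀ (a c : ZMod q), 0 ≤ W q ε a c := fun a c => W_nonneg q ε hε hε' a c
  have hgnn : ∀ k a, 0 ≤ g k a := fun k a => le_min (hWnn _ _) (hWnn _ _)
  -- sum of g over the alphabet
  have hsum : ∀ k, ∑ a : ZMod q, g k a = if x k = x' k then 1 else ε := by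
    intro k
    rcases hclose k with h | h | h
    · have he : x' k = x k := by
        have := sub_eq_zero.mp h; exact this
      rw [if_pos he.symm]
      simp only [hg, he, min_self]
      exact sum_W q hq ε (x k)
    · have he : x' k = x k + 1 := by linear_combination h
      have hne : x k ≠ x' k := fun hh => h1 (by rw [he] at hh; linear_combination hh.symm - (rfl : x k = x k))
      rw [if_neg hne]
      simp only [hg, he]
      exact sum_min_adj q hq ε hε hε' (x k)
    · have he : x k = x' k + 1 := by linear_combination -h
      have hne : x k ≠ x' k := fun hh => h1 (by rw [he] at hh; linear_combination hh - (rfl : x' k = x' k))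
      rw [if_neg hne]
      have : ∀ a, g k a = min (W q ε a (x' k)) (W q ε a (x' k + 1)) := by
        intro a; simp only [hg, he, min_comm]
      simp only [this]
      exact sum_min_adj q hq ε hε hε' (x' k)
  -- total sum identity
  have key : ∑ y : Fin n → ZMod q, ∏ k, g k (y k)
      = ε ^ ((Finset.univ.filter fun k => x k ≠ x' k).card) := by
    rw [← Fintype.piFinset_univ, ← Finset.prod_univ_sum]
    have : ∀ k, ∑ a : ZMod q, g k a = if x k = x' k then 1 else ε := hsum
    simp only [this]
    rw [Finset.prod_ite]
    simp [Finset.prod_const]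
  -- pointwise bound by min of the two likelihoods
  have hmin : ∀ y : Fin n → ZMod q,
      ∏ k, g k (y k) ≤ min (Wn q n ε y x) (Wn q n ε y x') := by
    intro y
    refine le_min ?_ ?_
    · exact Finset.prod_le_prod (fun k _ => hgnn k (y k)) (fun k _ => min_le_left _ _)
    · exact Finset.prod_le_prod (fun k _ => hgnn k (y k)) (fun k _ => min_le_right _ _)
  have hWnnn : ∀ (y z : Fin n → ZMod q), 0 ≤ Wn q n ε y z := by
    intro y z; exact Finset.prod_nonneg fun k _ => hWnn _ _
  -- termwise: min ≤ sum of the two indicator terms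
  have hterm : ∀ y : Fin n → ZMod q,
      min (Wn q n ε y x) (Wn q n ε y x')
        ≤ (if φ y = m then 0 else Wn q n ε y x) + (if φ y = m' then 0 else Wn q n ε y x') := by
    intro y
    by_cases hy : φ y = m
    · have hy' : φ y ≠ m' := fun h => hmm (hy ▸ h ▸ rfl)
      rw [if_pos hy, if_neg hy', zero_add]
      exact min_le_right _ _
    · rw [if_neg hy]
      have : (0:ℝ) ≤ (if φ y = m' then 0 else Wn q n ε y x') := by
        split_ifs with h <;> [exact le_refl 0; exact hWnnn _ _]
      calc min (Wn q n ε y x) (Wn q n ε y x') ≤ Wn q n ε y x := min_le_left _ _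
        _ ≤ _ := by linarith
  have hsum2 : ε ^ ((Finset.univ.filter fun k => x k ≠ x' k).card)
      ≤ (∑ y : Fin n → ZMod q, if φ y = m then 0 else Wn q n ε y x)
        + (∑ y : Fin n → ZMod q, if φ y = m' then 0 else Wn q n ε y x') := by
    rw [← key, ← Finset.sum_add_distrib]
    exact Finset.sum_le_sum fun y _ => le_trans (hmin y) (hterm y)
  set A := ∑ y : Fin n → ZMod q, if φ y = m then 0 else Wn q n ε y x with hA
  set B := ∑ y : Fin n → ZMod q, if φ y = m' then 0 else Wn q n ε y x' with hB
  have h3 : A ≤ max A B := le_max_left _ _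
  have h4 : B ≤ max A B := le_max_right _ _
  linarith
end
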